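/- Given a monoidal category (C, e, ·), there is a monoidal structure (the parallel product ⊗) on ΣΠC with unit e given by (∑_{i∈I} ∏_{a∈A_i} c_{i,a}) ⊗ (∑_{j∈J} ∏_{b∈B_j} d_{j,b}) ≅ ∑_{(i,j)∈I×J} ∏_{(a,b)∈A_i×B_j} (c_{i,a} · d_{j,b}). -/

import Mathlib

open CategoryTheory Limits Opposite MonoidalCategory

universe v u

/-- The free product completion of a category. -/
structure FreeProd (C : Type u) [Category.{v} C] where
  ι : Type v
  obj : ι → C

instance FreeProd.category (C : Type u) [Category.{v} C] : Category.{v} (FreeProd C) where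
  Hom X Y := Σ f : Y.ι → X.ι, ∀ j, X.obj (f j) ⟶ Y.obj j
  id X := ⟨fun i => i, fun _ => 𝟙 _⟩
  comp {X Y Z} F G := ⟨fun k => F.1 (G.1 k), fun k => F.2 (G.1 k) ≫ G.2 k⟩
  id_comp F := by obtain ⟨f, g⟩ := F; dsimp; congr 1 <;> simp
  comp_id F := by obtain ⟨f, g⟩ := F; dsimp; congr 1 <;> simp
  assoc F G H := by dsimp; congr 1 <;> simp

/-- The free coproduct completion of a category. -/
structure FreeCoprod (C : Type u) [Category.{v} C] where
  ι : Type v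
  obj : ι → C

instance FreeCoprod.category (C : Type u) [Category.{v} C] : Category.{v} (FreeCoprod C) where
  Hom X Y := Σ f : X.ι → Y.ι, ∀ i, X.obj i ⟶ Y.obj (f i)
  id X := ⟨fun i => i, fun _ => 𝟙 _⟩
  comp {X Y Z} F G := ⟨fun i => G.1 (F.1 i), fun i => F.2 i ≫ G.2 (F.1 i)⟩
  id_comp F := by obtain ⟨f, g⟩ := F; dsimp; congr 1 <;> simp
  comp_id F := by obtain ⟨f, g⟩ := F; dsimp; congr 1 <;> simp
  assoc F G H := by dsimp; congr 1 <;> simp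

/-- The category of polynomials in `C`: the free coproduct completion of the free product
completion of `C`. -/
abbrev SigmaPi (C : Type u) [Category.{v} C] := FreeCoprod (FreeProd C)

/-- The polynomial `∑_{i∈I} ∏_{a∈A_i} c_{i,a}` as an object of `ΣΠC`. -/
def polyObj {C : Type u} [Category.{v} C] (I : Type v) (A : I → Type v)
    (c : ∀ i, A i → C) : SigmaPi C :=
  ⟨I, fun i => ⟨A i, c i⟩⟩

/-!
Both free completions inherit a monoidal structure from their base: tensor two families
pointwise over the product of their index types. Every structure map is a reindexing along a
canonical bijection of products of index types whose components are the corresponding structure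
maps of the base, so each coherence axiom reduces componentwise to the one in the base. Lifting
`·` first to `ΠC` and then to `Σ(ΠC)` gives the parallel product, which on polynomials is
definitionally the stated formula.
-/

namespace FreeProd

variable {C : Type u} [Category.{v} C]

attribute [simps] category

@[ext] theorem hom_ext {X Y : FreeProd C} {F G : X ⟶ Y} (h : F.1 = G.1)
    (h' : ∀ j, HEq (F.2 j) (G.2 j)) : F = G :=
  Sigma.ext h (Function.hfunext rfl fun j _ e => eq_of_heq e ▸ h' j)

variable [MonoidalCategory C]

@[simps]
instance monoidalCategoryStruct : MonoidalCategoryStruct (FreeProd C) where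
  tensorObj X Y := ⟨X.ι × Y.ι, fun p => X.obj p.1 ⊗ Y.obj p.2⟩
  whiskerLeft X _ _ G := ⟨Prod.map id G.1, fun p => X.obj p.1 ◁ G.2 p.2⟩
  whiskerRight F Y := ⟨Prod.map F.1 id, fun p => F.2 p.1 ▷ Y.obj p.2⟩
  tensorHom F G := ⟨Prod.map F.1 G.1, fun p => F.2 p.1 ⊗ₘ G.2 p.2⟩
  tensorUnit := ⟨PUnit, fun _ => 𝟙_ C⟩
  associator X Y Z :=
    { hom := ⟨fun p => ((p.1, p.2.1), p.2.2), fun _ => (α_ _ _ _).hom⟩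
      inv := ⟨fun p => (p.1.1, p.1.2, p.2), fun _ => (α_ _ _ _).inv⟩ }
  leftUnitor X :=
    { hom := ⟨fun i => (PUnit.unit, i), fun _ => (λ_ _).hom⟩
      inv := ⟨Prod.snd, fun _ => (λ_ _).inv⟩ }
  rightUnitor X :=
    { hom := ⟨fun i => (i, PUnit.unit), fun _ => (ρ_ _).hom⟩
      inv := ⟨Prod.fst, fun _ => (ρ_ _).inv⟩ }

instance monoidalCategory : MonoidalCategory (FreeProd C) := .ofTensorHom

end FreeProd

namespace FreeCoprod

variable {C : Type u} [Category.{v} C]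

attribute [simps] category

@[ext] theorem hom_ext {X Y : FreeCoprod C} {F G : X ⟶ Y} (h : F.1 = G.1)
    (h' : ∀ i, HEq (F.2 i) (G.2 i)) : F = G :=
  Sigma.ext h (Function.hfunext rfl fun i _ e => eq_of_heq e ▸ h' i)

variable [MonoidalCategory C]

@[simps]
instance monoidalCategoryStruct : MonoidalCategoryStruct (FreeCoprod C) where
  tensorObj X Y := ⟨X.ι × Y.ι, fun p => X.obj p.1 ⊗ Y.obj p.2⟩
  whiskerLeft X _ _ G := ⟨Prod.map id G.1, fun p => X.obj p.1 ◁ G.2 p.2⟩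
  whiskerRight F Y := ⟨Prod.map F.1 id, fun p => F.2 p.1 ▷ Y.obj p.2⟩
  tensorHom F G := ⟨Prod.map F.1 G.1, fun p => F.2 p.1 ⊗ₘ G.2 p.2⟩
  tensorUnit := ⟨PUnit, fun _ => 𝟙_ C⟩
  associator X Y Z :=
    { hom := ⟨fun p => (p.1.1, p.1.2, p.2), fun _ => (α_ _ _ _).hom⟩
      inv := ⟨fun p => ((p.1, p.2.1), p.2.2), fun _ => (α_ _ _ _).inv⟩ }
  leftUnitor X :=
    { hom := ⟨Prod.snd, fun _ => (λ_ _).hom⟩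
      inv := ⟨fun i => (PUnit.unit, i), fun _ => (λ_ _).inv⟩ }
  rightUnitor X :=
    { hom := ⟨Prod.fst, fun _ => (ρ_ _).hom⟩
      inv := ⟨fun i => (i, PUnit.unit), fun _ => (ρ_ _).inv⟩ }

instance monoidalCategory : MonoidalCategory (FreeCoprod C) := .ofTensorHom

end FreeCoprod

/-- for a monoidal category `(C, e, ·)`, there is a monoidal structure
(the parallel product `⊗`) on `ΣΠC` with unit `e` given by
`(∑_i ∏_a c_{i,a}) ⊗ (∑_j ∏_b d_{j,b}) ≅ ∑_{(i,j)∈I×J} ∏_{(a,b)∈A_i×B_j} (c_{i,a} · d_{j,b})`. -/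
theorem sigmaPi_parallel_monoidal (C : Type u) [Category.{v} C] [MonoidalCategory C] :
    ∃ M : MonoidalCategory (SigmaPi C),
      Nonempty (M.tensorUnit ≅ polyObj PUnit (fun _ => PUnit) (fun _ _ => 𝟙_ C)) ∧
      (∀ (I : Type v) (A : I → Type v) (c : ∀ i, A i → C)
          (J : Type v) (B : J → Type v) (d : ∀ j, B j → C),
        Nonempty (M.tensorObj (polyObj I A c) (polyObj J B d) ≅
          polyObj (I × J) (fun p => A p.1 × B p.2)
            (fun p q => c p.1 q.1 ⊗ d p.2 q.2))) :=
  ⟨inferInstance, ⟨Iso.refl _⟩, fun _ _ _ _ _ _ => ⟨Iso.refl _⟩⟩
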